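/- arXiv:2407.05072 — 3 statements merged into one kernel-verified Lean document; each statement's English description precedes it below -/
import Mathlib

section
/- Let Q be a commutative ring, d ≥ 2, ζ ∈ Q with ∏_{i=0}^{d-1}(t − ζ^i) = t^d − 1 in Q[t] (so ζ^d = 1 and ζ is a unit with inverse ζ^{d-1}), and f, g ∈ Q. For any d-fold matrix factorization X of f of rank n and any d-fold matrix factorization Y of g of rank m, there is an isomorphism of d-fold matrix factorizations of f+g: X ⊗_ζ Y ≅ Y ⊗_{ζ^{-1}} X, where the second tensor product is formed using the root of unity ζ^{-1} = ζ^{d-1}. -/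
open Matrix Polynomial
open scoped Kronecker

namespace MF

variable {Q : Type*} [CommRing Q]

/-- The cyclic product `φ_k * φ_{k+1} * ⋯ * φ_{k+d-1}`. -/
def cycProd {d : ℕ} {ι : Type*} [Fintype ι] [DecidableEq ι]
    (φ : ZMod d → Matrix ι ι Q) (k : ZMod d) : Matrix ι ι Q :=
  (List.ofFn (fun i : Fin d => φ (k + ((i : ℕ) : ZMod d)))).prod

/-- `φ` is a `d`-fold matrix factorization of `f`. -/
def IsMF (d : ℕ) {ι : Type*} [Fintype ι] [DecidableEq ι] (f : Q)
    (φ : ZMod d → Matrix ι ι Q) : Prop :=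
  ∀ k : ZMod d, cycProd φ k = f • (1 : Matrix ι ι Q)

/-- The `i`-fold shift `T^i X`, given by `(T^i X)_k = φ_{k+i}`. -/
def shift {d : ℕ} {ι : Type*} (i : ZMod d) (φ : ZMod d → Matrix ι ι Q) :
    ZMod d → Matrix ι ι Q :=
  fun k => φ (k + i)

/-- The tensor product `X ⊗_ζ Y` of matrix factorizations. -/
def tensor {d n m : ℕ} (ζ : Q) (φ : ZMod d → Matrix (Fin n) (Fin n) Q)
    (ψ : ZMod d → Matrix (Fin m) (Fin m) Q) :
    ZMod d → Matrix (Fin d × Fin n × Fin m) (Fin d × Fin n × Fin m) Q :=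
  fun k => Matrix.of fun p q =>
    (if q.1 = p.1 then
        ζ ^ (p.1 : ℕ) • ((1 : Matrix (Fin n) (Fin n) Q) ⊗ₖ ψ (k - ((p.1 : ℕ) : ZMod d)))
      else if ((q.1 : ℕ) : ZMod d) = ((p.1 : ℕ) : ZMod d) + 1 then
        φ (((p.1 : ℕ) : ZMod d) + 1) ⊗ₖ (1 : Matrix (Fin m) (Fin m) Q)
      else (0 : Matrix (Fin n × Fin m) (Fin n × Fin m) Q)) p.2 q.2

/-- Isomorphism of `d`-fold matrix factorizations. -/
def Iso {d : ℕ} {ι κ : Type*} [Fintype ι] [Fintype κ] [DecidableEq ι] [DecidableEq κ]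
    (Φ : ZMod d → Matrix ι ι Q) (Ψ : ZMod d → Matrix κ κ Q) : Prop :=
  ∃ (α : ZMod d → Matrix κ ι Q) (β : ZMod d → Matrix ι κ Q),
    (∀ k, α k * β k = 1) ∧ (∀ k, β k * α k = 1) ∧
    (∀ k, α (k - 1) * Φ k = Ψ k * α k)

/-- Direct sum of matrix factorizations. -/
def dsum {d : ℕ} {ι κ : Type*} (φ : ZMod d → Matrix ι ι Q) (ψ : ZMod d → Matrix κ κ Q) :
    ZMod d → Matrix (ι ⊕ κ) (ι ⊕ κ) Q :=
  fun k => Matrix.fromBlocks (φ k) 0 0 (ψ k)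

/-- Direct sum of a finite family of matrix factorizations with the same underlying size. -/
def dsumFam {d t : ℕ} {ι : Type*} (Z : Fin t → (ZMod d → Matrix ι ι Q)) :
    ZMod d → Matrix (Fin t × ι) (Fin t × ι) Q :=
  fun k => Matrix.of fun p q => if p.1 = q.1 then Z p.1 k p.2 q.2 else 0

/-- A matrix factorization (of positive rank) is indecomposable if it is not isomorphic to a
direct sum of two matrix factorizations of positive rank. -/
def Indecomposable (d : ℕ) {ι : Type*} [Fintype ι] [DecidableEq ι] (f : Q)
    (φ : ZMod d → Matrix ι ι Q) : Prop :=
  Nonempty ι ∧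
    ¬ ∃ (n₁ n₂ : ℕ) (ψ₁ : ZMod d → Matrix (Fin n₁) (Fin n₁) Q)
        (ψ₂ : ZMod d → Matrix (Fin n₂) (Fin n₂) Q),
        0 < n₁ ∧ 0 < n₂ ∧ IsMF d f ψ₁ ∧ IsMF d f ψ₂ ∧ Iso φ (dsum ψ₁ ψ₂)

/-- A matrix factorization over a local ring is reduced if all entries of its matrices lie in
the maximal ideal. -/
def Reduced [IsLocalRing Q] {d : ℕ} {ι : Type*} (φ : ZMod d → Matrix ι ι Q) : Prop :=
  ∀ (k : ZMod d) (p q : ι), φ k p q ∈ IsLocalRing.maximalIdeal Q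

/-- A matrix factorization over a local `K`-algebra with residue field `K` is strongly
indecomposable (Definition 5.1). -/
def StronglyIndec (K : Type*) [Field K] [Algebra K Q] [IsLocalRing Q]
    {d : ℕ} {ι : Type*} [Fintype ι] [DecidableEq ι]
    (φ : ZMod d → Matrix ι ι Q) : Prop :=
  (∀ j l : ZMod d, j ≠ l → ∀ α β : Matrix ι ι Q,
      α * φ j = φ l * β →
      (∀ p q, α p q ∈ IsLocalRing.maximalIdeal Q) ∧
      (∀ p q, β p q ∈ IsLocalRing.maximalIdeal Q)) ∧
  (∀ (l : ZMod d) (α β : Matrix ι ι Q),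
      α * φ l = φ l * β →
      ∃ ξ : K, (∀ p q, (α - algebraMap K Q ξ • (1 : Matrix ι ι Q)) p q ∈
                  IsLocalRing.maximalIdeal Q) ∧
               (∀ p q, (β - algebraMap K Q ξ • (1 : Matrix ι ι Q)) p q ∈
                  IsLocalRing.maximalIdeal Q))

end MF

/-! The isomorphism is a weighted block permutation. In degree `k` the block `(j, b, a)` of
`Y ⊗_{ζ⁻¹} X` is matched with the block `(i, a, b)` of `X ⊗_ζ Y` with `i + j = k` in `ℤ/d`, with
weight `ζ^{ij}`. Since `ζ^d = 1` these weights are units depending only on residues mod `d`, and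
they intertwine the differentials: the diagonal blocks `ζ^i (1 ⊗ ψ)` of `X ⊗_ζ Y` become the
off-diagonal blocks `ψ ⊗ 1` of `Y ⊗_{ζ⁻¹} X` and vice versa, the weights absorbing the factors
`ζ^i` and `ζ^{-j}`. -/

theorem pow_eq_one_of_prod_X_sub_C_eq_X_pow_sub_one {Q : Type*} [CommRing Q] {d : ℕ}
    (hd : 2 ≤ d) {ζ : Q} (hζ : ∏ i ∈ Finset.range d, (X - C (ζ ^ i)) = X ^ d - 1) : ζ ^ d = 1 := by
  have h := congrArg (eval ζ) hζ
  rw [eval_prod, Finset.prod_eq_zero (i := 1) (by simp; omega) (by simp)] at h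
  simp only [eval_sub, eval_pow, eval_X, eval_one] at h
  exact sub_eq_zero.mp h.symm

namespace ZMod

variable {M : Type*} [Monoid M] {d : ℕ} {ζ : M}

theorem pow_val_add [NeZero d] (hζ : ζ ^ d = 1) (a b : ZMod d) :
    ζ ^ (a + b).val = ζ ^ a.val * ζ ^ b.val := by
  rw [val_add, ← pow_eq_pow_mod _ hζ, pow_add]

theorem pow_val_natCast (hζ : ζ ^ d = 1) (N : ℕ) : ζ ^ (N : ZMod d).val = ζ ^ N := by
  rw [val_natCast, ← pow_eq_pow_mod _ hζ]

theorem pow_pred_pow_val [NeZero d] (hζ : ζ ^ d = 1) (a : ZMod d) :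
    (ζ ^ (d - 1)) ^ a.val = ζ ^ (-a).val := by
  rw [← pow_mul, ← pow_val_natCast hζ]
  push_cast [Nat.cast_sub NeZero.one_le, natCast_self, natCast_zmod_val]
  ring_nf

end ZMod

namespace MF

variable {Q : Type*} [CommRing Q]

def finEquivZMod (d : ℕ) [NeZero d] : Fin d ≃ ZMod d where
  toFun i := (i : ℕ)
  invFun x := ⟨x.val, x.val_lt⟩
  left_inv i := Fin.ext (ZMod.val_cast_of_lt i.isLt)
  right_inv := ZMod.natCast_zmod_val

theorem tensor_apply_finEquivZMod_symm {d n m : ℕ} [NeZero d] (ζ : Q)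
    (φ : ZMod d → Matrix (Fin n) (Fin n) Q) (ψ : ZMod d → Matrix (Fin m) (Fin m) Q)
    (k x x' : ZMod d) (a a' : Fin n) (b b' : Fin m) :
    tensor ζ φ ψ k ((finEquivZMod d).symm x, a, b) ((finEquivZMod d).symm x', a', b') =
      if x' = x then ζ ^ x.val * ((1 : Matrix (Fin n) (Fin n) Q) a a' * ψ (k - x) b b')
      else if x' = x + 1 then φ (x + 1) a a' * (1 : Matrix (Fin m) (Fin m) Q) b b'
      else 0 := by
  have hcast : ∀ z : ZMod d, (((finEquivZMod d).symm z : ℕ) : ZMod d) = z :=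
    (finEquivZMod d).apply_symm_apply
  simp only [tensor, of_apply, hcast, (finEquivZMod d).symm.injective.eq_iff]
  split_ifs <;> simp [finEquivZMod]

theorem iso_of_weighted_equiv {d : ℕ} {ι κ : Type*} [Fintype ι] [Fintype κ] [DecidableEq ι]
    [DecidableEq κ] {Φ : ZMod d → Matrix ι ι Q} {Ψ : ZMod d → Matrix κ κ Q}
    (σ : ZMod d → κ ≃ ι) (w w' : ZMod d → κ → Q) (hw : ∀ k p, w k p * w' k p = 1)
    (hΦΨ : ∀ k p q, w (k - 1) p * Φ k (σ (k - 1) p) q =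
      Ψ k p ((σ k).symm q) * w k ((σ k).symm q)) :
    Iso Φ Ψ := by
  let P : ZMod d → Matrix κ ι Q := fun k => (σ k).toPEquiv.toMatrix
  let P' : ZMod d → Matrix ι κ Q := fun k => (σ k).symm.toPEquiv.toMatrix
  have hPP' : ∀ k, P k * P' k = 1 := fun k => by
    rw [← PEquiv.toMatrix_trans, ← Equiv.toPEquiv_trans, Equiv.self_trans_symm,
      Equiv.toPEquiv_refl, PEquiv.toMatrix_refl]
  have hww' : ∀ k, diagonal (w k) * diagonal (w' k) = 1 := fun k => by
    rw [diagonal_mul_diagonal, ← diagonal_one]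
    exact congrArg diagonal (funext (hw k))
  have hαβ : ∀ k, diagonal (w k) * P k * (P' k * diagonal (w' k)) = 1 := fun k => by
    rw [Matrix.mul_assoc, ← Matrix.mul_assoc (P k), hPP', Matrix.one_mul, hww']
  refine ⟨fun k => diagonal (w k) * P k, fun k => P' k * diagonal (w' k), hαβ,
    fun k => (mul_eq_one_comm_of_equiv (σ k)).mp (hαβ k), fun k => ?_⟩
  ext p q
  rw [Matrix.mul_assoc, PEquiv.toMatrix_toPEquiv_mul, ← Matrix.mul_assoc,
    PEquiv.mul_toMatrix_toPEquiv, diagonal_mul, submatrix_apply, submatrix_apply, mul_diagonal]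
  exact hΦΨ k p q

theorem tensor_entry_comm {d n m : ℕ} [Fact (1 < d)] {ζ : Q} (hζ : ζ ^ d = 1)
    (φ : ZMod d → Matrix (Fin n) (Fin n) Q) (ψ : ZMod d → Matrix (Fin m) (Fin m) Q)
    (k x y : ZMod d) (a a' : Fin n) (b b' : Fin m) :
    ζ ^ ((k - 1 - y) * y).val *
        tensor ζ φ ψ k ((finEquivZMod d).symm (k - 1 - y), a, b) ((finEquivZMod d).symm x, a', b') =
      tensor (ζ ^ (d - 1)) ψ φ k ((finEquivZMod d).symm y, b, a)
          ((finEquivZMod d).symm (k - x), b', a') * ζ ^ (x * (k - x)).val := by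
  simp only [tensor_apply_finEquivZMod_symm]
  have h10 : (1 : ZMod d) ≠ 0 := one_ne_zero
  by_cases hdiag : x = k - 1 - y
  · subst hdiag
    have hshift : k - (k - 1 - y) = y + 1 := by ring
    rw [if_pos rfl, hshift, if_neg fun h => h10 (by linear_combination h), if_pos rfl]
    have hpow : ζ ^ ((k - 1 - y) * y).val * ζ ^ (k - 1 - y).val =
        ζ ^ ((k - 1 - y) * (y + 1)).val := by
      rw [← ZMod.pow_val_add hζ]; ring_nf
    linear_combination ((1 : Matrix (Fin n) (Fin n) Q) a a' * ψ (y + 1) b b') * hpow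
  by_cases hoff : x = k - y
  · subst hoff
    have hshift : k - (k - y) = y := by ring
    rw [if_neg hdiag, if_pos (by ring), hshift, if_pos rfl, ZMod.pow_pred_pow_val hζ,
      show k - 1 - y + 1 = k - y by ring]
    have hpow : ζ ^ (-y).val * ζ ^ ((k - y) * y).val = ζ ^ ((k - 1 - y) * y).val := by
      rw [← ZMod.pow_val_add hζ]; ring_nf
    linear_combination -(φ (k - y) a a' * (1 : Matrix (Fin m) (Fin m) Q) b b') * hpow
  · rw [if_neg hdiag, if_neg fun h => hoff (by linear_combination h),
      if_neg fun h => hoff (by linear_combination -h),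
      if_neg fun h => hdiag (by linear_combination -h)]
    ring

end MF

theorem tensor_comm_general {Q : Type*} [CommRing Q] (d : ℕ) (hd : 2 ≤ d) (ζ : Q)
    (hζ : ∏ i ∈ Finset.range d, (Polynomial.X - Polynomial.C (ζ ^ i)) =
      Polynomial.X ^ d - 1)
    (n m : ℕ)
    (φ : ZMod d → Matrix (Fin n) (Fin n) Q)
    (ψ : ZMod d → Matrix (Fin m) (Fin m) Q) :
    MF.Iso (MF.tensor ζ φ ψ) (MF.tensor (ζ ^ (d - 1)) ψ φ) := by
  have : Fact (1 < d) := ⟨hd⟩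
  have hζd : ζ ^ d = 1 := pow_eq_one_of_prod_X_sub_C_eq_X_pow_sub_one hd hζ
  let e := MF.finEquivZMod d
  refine MF.iso_of_weighted_equiv
    (fun k => (e.trans ((Equiv.subLeft k).trans e.symm)).prodCongr (Equiv.prodComm _ _))
    (fun k p => ζ ^ ((k - e p.1) * e p.1).val) (fun k p => ζ ^ (-((k - e p.1) * e p.1)).val)
    (fun k p => by rw [← ZMod.pow_val_add hζd, add_neg_cancel, ZMod.val_zero, pow_zero]) ?_
  rintro k ⟨j, b, a⟩ ⟨i, a', b'⟩
  obtain ⟨y, rfl⟩ := e.symm.surjective j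
  obtain ⟨x, rfl⟩ := e.symm.surjective i
  simpa [e, neg_add_eq_sub] using MF.tensor_entry_comm hζd φ ψ k x y a a' b b'

/-- `X ⊗_ζ Y ≅ Y ⊗_{ζ⁻¹} X`, where `ζ⁻¹ = ζ^{d-1}`. -/
theorem tensor_comm {Q : Type*} [CommRing Q] (d : ℕ) (hd : 2 ≤ d) (ζ : Q)
    (hζ : ∏ i ∈ Finset.range d, (Polynomial.X - Polynomial.C (ζ ^ i)) =
      Polynomial.X ^ d - 1)
    (f g : Q) (n m : ℕ)
    (φ : ZMod d → Matrix (Fin n) (Fin n) Q) (hφ : MF.IsMF d f φ)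
    (ψ : ZMod d → Matrix (Fin m) (Fin m) Q) (hψ : MF.IsMF d g ψ) :
    MF.Iso (MF.tensor ζ φ ψ) (MF.tensor (ζ ^ (d - 1)) ψ φ) :=
  tensor_comm_general d hd ζ hζ n m φ ψ
end

section
/- Let X be a d-fold matrix factorization of f over S₁ of rank n and Y a d-fold matrix factorization of g over S₂ of rank m. For a matrix factorization W over S, let W_x (resp. W_y) denote the matrix factorization over S₂ (resp. S₁) obtained by applying entrywise the k-algebra map S → S₂ sending every x_i to 0 (resp. the map S → S₁ sending every y_j to 0); for c ∈ k, cW denotes W with every one of its matrices multiplied by c. Then: (i) if X is reduced, (X ⊗_ζ Y)_x ≅ ⨁_{i=1}^{d} (ζ^{i-1} T^{1-i}Y)^{⊕n} as d-fold matrix factorizations of g over S₂; (ii) if Y is reduced, (X ⊗_ζ Y)_y ≅ ⨁_{i=1}^{d} (ζ^{1-i} T^{1-i}X)^{⊕m} as d-fold matrix factorizations of f over S₁. -/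
open Matrix Polynomial
open scoped Kronecker

namespace MF

open scoped Classical in
/-- The canonical inclusion `k⟦x⟧ → k⟦x,y⟧` (the `x`-variables indexed by `σ`), defined
coefficientwise. -/
noncomputable def psIncl {K : Type*} [CommSemiring K] (σ τ : Type*)
    (F : MvPowerSeries σ K) : MvPowerSeries (σ ⊕ τ) K :=
  fun e : (σ ⊕ τ) →₀ ℕ =>
    if ∀ j : τ, e (Sum.inr j) = 0 then
      MvPowerSeries.coeff (R := K) (Finsupp.comapDomain Sum.inl e Sum.inl_injective.injOn) F
    else 0

open scoped Classical in
/-- The canonical inclusion `k⟦y⟧ → k⟦x,y⟧` (the `y`-variables indexed by `τ`), defined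
coefficientwise. -/
noncomputable def psInclR {K : Type*} [CommSemiring K] (σ τ : Type*)
    (F : MvPowerSeries τ K) : MvPowerSeries (σ ⊕ τ) K :=
  fun e : (σ ⊕ τ) →₀ ℕ =>
    if ∀ j : σ, e (Sum.inl j) = 0 then
      MvPowerSeries.coeff (R := K) (Finsupp.comapDomain Sum.inr e Sum.inr_injective.injOn) F
    else 0

/-- The canonical `K`-algebra projection `k⟦x,y⟧ → k⟦y⟧` sending every `x`-variable to `0`,
defined coefficientwise. -/
noncomputable def psProjR {K : Type*} [CommSemiring K] (σ τ : Type*)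
    (F : MvPowerSeries (σ ⊕ τ) K) : MvPowerSeries τ K :=
  fun e : τ →₀ ℕ => MvPowerSeries.coeff (R := K) (Finsupp.mapDomain Sum.inr e) F

/-- The canonical `K`-algebra projection `k⟦x,y⟧ → k⟦x⟧` sending every `y`-variable to `0`,
defined coefficientwise. -/
noncomputable def psProjL {K : Type*} [CommSemiring K] (σ τ : Type*)
    (F : MvPowerSeries (σ ⊕ τ) K) : MvPowerSeries σ K :=
  fun e : σ →₀ ℕ => MvPowerSeries.coeff (R := K) (Finsupp.mapDomain Sum.inl e) F

end MF


/-!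
Substituting `0` for the variables of one factor is a ring map, so it commutes with `⊗_ζ`, and it
kills the matrices of that factor when they are reduced. Modulo `x` only the diagonal blocks
`ζ^i (I_n ⊗ ψ_{k-i})` survive, which is the stated sum on the nose. Modulo `y` only the cyclic
superdiagonal blocks `φ_{i+1} ⊗ I_m` survive; sending block `k - i` to summand `i` and rescaling
it by `ζ^(i k)` identifies this with the sum of the `ζ^(-i) T^(-i) X`.
-/

lemma ZMod.finEquiv_apply {d : ℕ} [NeZero d] (i : Fin d) :
    ZMod.finEquiv d i = ((i : ℕ) : ZMod d) := by
  obtain ⟨d, rfl⟩ := Nat.exists_eq_succ_of_ne_zero (NeZero.ne d)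
  exact (Fin.cast_val_eq_self i).symm

lemma pow_eq_pow_of_natCast_eq {M : Type*} [Monoid M] {ω : M} {d s t : ℕ} (hω : ω ^ d = 1)
    (h : (s : ZMod d) = t) : ω ^ s = ω ^ t := by
  have hst : s % orderOf ω = t % orderOf ω :=
    ((ZMod.natCast_eq_natCast_iff s t d).1 h).of_dvd (orderOf_dvd_of_pow_eq_one hω)
  rw [← pow_mod_orderOf, hst, pow_mod_orderOf]

lemma pow_eq_one_of_prod_X_sub_C_pow_eq {R : Type*} [CommRing R] {d : ℕ} (hd : 1 < d) {ζ : R}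
    (hζ : ∏ i ∈ Finset.range d, (X - C (ζ ^ i)) = X ^ d - 1) : ζ ^ d = 1 := by
  have h := congrArg (eval ζ) hζ
  rw [eval_prod, Finset.prod_eq_zero (Finset.mem_range.2 hd) (by simp), eval_sub, eval_pow, eval_X,
    eval_one] at h
  exact sub_eq_zero.1 h.symm

namespace MvPowerSeries

open Filter

lemma killCompl_rename_of_disjoint {K σ τ υ : Type*} [CommSemiring K] (e : σ ↪ υ) (f : τ → υ)
    [TendstoCofinite f] (hef : ∀ s t, e s ≠ f t) (p : MvPowerSeries τ K) :
    killCompl e (rename f p) = C (constantCoeff p) := by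
  classical
  ext x
  rw [coeff_killCompl, coeff_C]
  split_ifs with hx
  · rw [hx, Finsupp.embDomain_zero, coeff_zero_eq_constantCoeff_apply, constantCoeff_rename]
  · refine coeff_rename_eq_zero f p fun ⟨y, hy⟩ => hx ?_
    ext s
    rw [Finsupp.coe_zero, Pi.zero_apply, ← Finsupp.embDomain_apply_self e x s, ← hy]
    exact Finsupp.mapDomain_of_notMem_range y (e s) fun ⟨t, ht⟩ => hef s t ht.symm

lemma constantCoeff_eq_zero_of_mem_maximalIdeal {σ K : Type*} [Field K] {F : MvPowerSeries σ K}
    (hF : F ∈ IsLocalRing.maximalIdeal (MvPowerSeries σ K)) : constantCoeff F = 0 := by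
  by_contra h0
  exact hF (isUnit_iff_constantCoeff.2 (isUnit_iff_ne_zero.2 h0))

end MvPowerSeries

namespace MF

section PowerSeries

open MvPowerSeries Function

variable {K : Type*} [CommSemiring K] {σ τ : Type*}

lemma psIncl_eq_rename : psIncl (K := K) σ τ = rename (Embedding.inl : σ ↪ σ ⊕ τ) := by
  funext F
  ext e
  by_cases he : ∀ j, e (Sum.inr j) = 0
  · have hsupp : ↑e.support ⊆ Set.range (Embedding.inl : σ ↪ σ ⊕ τ) := by
      rintro (s | t) h
      · exact ⟨s, rfl⟩
      · exact absurd (he t) (Finsupp.mem_support_iff.1 h)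
    conv_rhs => rw [← Finsupp.embDomain_comapDomain hsupp, coeff_embDomain_rename]
    exact if_pos he
  · refine (if_neg he).trans (coeff_rename_eq_zero _ F fun ⟨y, hy⟩ => he fun t => ?_).symm
    rw [← hy]
    exact Finsupp.mapDomain_of_notMem_range y _ (by simp)

lemma psInclR_eq_rename : psInclR (K := K) σ τ = rename (Embedding.inr : τ ↪ σ ⊕ τ) := by
  funext F
  ext e
  by_cases he : ∀ j, e (Sum.inl j) = 0
  · have hsupp : ↑e.support ⊆ Set.range (Embedding.inr : τ ↪ σ ⊕ τ) := by
      rintro (s | t) h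
      · exact absurd (he s) (Finsupp.mem_support_iff.1 h)
      · exact ⟨t, rfl⟩
    conv_rhs => rw [← Finsupp.embDomain_comapDomain hsupp, coeff_embDomain_rename]
    exact if_pos he
  · refine (if_neg he).trans (coeff_rename_eq_zero _ F fun ⟨y, hy⟩ => he fun t => ?_).symm
    rw [← hy]
    exact Finsupp.mapDomain_of_notMem_range y _ (by simp)

lemma psProjL_eq_killCompl : psProjL (K := K) σ τ = killCompl (Embedding.inl : σ ↪ σ ⊕ τ) := by
  funext F
  ext e
  rw [coeff_killCompl, Finsupp.embDomain_eq_mapDomain]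
  rfl

lemma psProjR_eq_killCompl : psProjR (K := K) σ τ = killCompl (Embedding.inr : τ ↪ σ ⊕ τ) := by
  funext F
  ext e
  rw [coeff_killCompl, Finsupp.embDomain_eq_mapDomain]
  rfl

lemma psProjR_psIncl (F : MvPowerSeries σ K) :
    psProjR σ τ (psIncl σ τ F) = MvPowerSeries.C (constantCoeff F) := by
  rw [psProjR_eq_killCompl, psIncl_eq_rename]
  exact killCompl_rename_of_disjoint _ _ (fun _ _ => Sum.inr_ne_inl) F

lemma psProjL_psInclR (G : MvPowerSeries τ K) :
    psProjL σ τ (psInclR σ τ G) = MvPowerSeries.C (constantCoeff G) := by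
  rw [psProjL_eq_killCompl, psInclR_eq_rename]
  exact killCompl_rename_of_disjoint _ _ (fun _ _ => Sum.inl_ne_inr) G

lemma psProjR_psInclR (G : MvPowerSeries τ K) : psProjR σ τ (psInclR σ τ G) = G := by
  rw [psProjR_eq_killCompl, psInclR_eq_rename, killCompl_rename_app]

lemma psProjL_psIncl (F : MvPowerSeries σ K) : psProjL σ τ (psIncl σ τ F) = F := by
  rw [psProjL_eq_killCompl, psIncl_eq_rename, killCompl_rename_app]

end PowerSeries

section Iso

variable {Q : Type*} [CommRing Q] {d : ℕ} {ι κ : Type*} [Fintype ι] [Fintype κ]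
  [DecidableEq ι] [DecidableEq κ]

lemma iso_refl (Φ : ZMod d → Matrix ι ι Q) : Iso Φ Φ :=
  ⟨fun _ => 1, fun _ => 1, fun _ => mul_one 1, fun _ => mul_one 1, fun _ => by simp⟩

lemma iso_of_monomial {Φ : ZMod d → Matrix ι ι Q} {Ψ : ZMod d → Matrix κ κ Q}
    (e : ZMod d → κ ≃ ι) (c : ZMod d → κ → Qˣ)
    (h : ∀ k p r, (c (k - 1) p : Q) * Φ k (e (k - 1) p) (e k r) = Ψ k p r * c k r) :
    Iso Φ Ψ := by
  let P : ZMod d → Matrix κ ι Q := fun k => (e k).toPEquiv.toMatrix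
  let P' : ZMod d → Matrix ι κ Q := fun k => (e k).symm.toPEquiv.toMatrix
  refine ⟨fun k => diagonal (fun p => (c k p : Q)) * P k,
    fun k => P' k * diagonal (fun p => (↑(c k p)⁻¹ : Q)),
    fun k => ?_, fun k => ?_, fun k => ?_⟩ <;> dsimp only [P, P']
  · rw [Matrix.mul_assoc, ← Matrix.mul_assoc (e k).toPEquiv.toMatrix, ← PEquiv.toMatrix_trans,
      ← Equiv.toPEquiv_trans, Equiv.self_trans_symm, Equiv.toPEquiv_refl, PEquiv.toMatrix_refl,
      Matrix.one_mul, diagonal_mul_diagonal]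
    simp
  · rw [Matrix.mul_assoc, ← Matrix.mul_assoc (diagonal _), diagonal_mul_diagonal]
    simp [← PEquiv.toMatrix_trans, ← Equiv.toPEquiv_trans]
  · rw [Matrix.mul_assoc, PEquiv.toMatrix_toPEquiv_mul, ← Matrix.mul_assoc,
      PEquiv.mul_toMatrix_toPEquiv]
    ext p q
    simpa [diagonal_mul, mul_diagonal] using h k p ((e k).symm q)

end Iso

section FinZMod

variable {d : ℕ} [NeZero d]

def finSubLeft (k : ZMod d) : Fin d ≃ Fin d :=
  ((ZMod.finEquiv d).toEquiv.trans (Equiv.subLeft k)).trans (ZMod.finEquiv d).toEquiv.symm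

lemma natCast_finSubLeft (k : ZMod d) (i : Fin d) :
    ((finSubLeft k i : ℕ) : ZMod d) = k - (i : ℕ) := by
  rw [← ZMod.finEquiv_apply, ← ZMod.finEquiv_apply]
  simp [finSubLeft]

lemma natCast_fin_inj {i j : Fin d} : ((i : ℕ) : ZMod d) = (j : ℕ) ↔ i = j := by
  rw [← ZMod.finEquiv_apply, ← ZMod.finEquiv_apply, (ZMod.finEquiv d).injective.eq_iff]

end FinZMod

section Tensor

variable {Q R : Type*} [CommRing Q] [CommRing R] {d n m : ℕ}

lemma tensor_map {F : Type*} [FunLike F Q R] [RingHomClass F Q R] (π : F) (ζ : Q)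
    (φ : ZMod d → Matrix (Fin n) (Fin n) Q) (ψ : ZMod d → Matrix (Fin m) (Fin m) Q)
    (k : ZMod d) :
    (tensor ζ φ ψ k).map π = tensor (π ζ) (fun k => (φ k).map π) (fun k => (ψ k).map π) k := by
  ext p q
  simp only [tensor, Matrix.map_apply, Matrix.of_apply]
  split_ifs <;> simp [Matrix.one_apply, apply_ite π]

lemma tensor_zero_left (ζ : Q) (ψ : ZMod d → Matrix (Fin m) (Fin m) Q) (k : ZMod d) :
    tensor ζ (0 : ZMod d → Matrix (Fin n) (Fin n) Q) ψ k =
      dsumFam (fun i : Fin d => dsumFam (fun _ : Fin n => fun k : ZMod d =>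
        ζ ^ (i : ℕ) • shift (-((i : ℕ) : ZMod d)) ψ k)) k := by
  ext ⟨i, p, s⟩ ⟨j, q, t⟩
  simp only [tensor, dsumFam, shift, Matrix.of_apply]
  split_ifs <;> simp_all [Matrix.one_apply, sub_eq_add_neg, eq_comm]

lemma tensor_zero_right_apply (h1 : (1 : ZMod d) ≠ 0) (ζ : Q)
    (φ : ZMod d → Matrix (Fin n) (Fin n) Q) (k : ZMod d) (i j : Fin d) (p q : Fin n)
    (s t : Fin m) :
    tensor ζ φ (0 : ZMod d → Matrix (Fin m) (Fin m) Q) k (i, p, s) (j, q, t) =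
      if ((j : ℕ) : ZMod d) = (i : ℕ) + 1 ∧ s = t then φ ((i : ℕ) + 1) p q else 0 := by
  simp only [tensor, Matrix.of_apply]
  split_ifs <;> simp_all

lemma iso_tensor_zero_right (hd : 1 < d) {ω : Q} (hω : ω ^ d = 1)
    (φ : ZMod d → Matrix (Fin n) (Fin n) Q) :
    Iso (tensor ω φ (0 : ZMod d → Matrix (Fin m) (Fin m) Q))
      (dsumFam (fun i : Fin d => dsumFam (fun _ : Fin m => fun k : ZMod d =>
        ω ^ ((d - (i : ℕ)) % d) • shift (-((i : ℕ) : ZMod d)) φ k))) := by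
  have : Fact (1 < d) := ⟨hd⟩
  let u : Qˣ := Units.ofPowEqOne ω d hω (by omega)
  refine iso_of_monomial (fun k => (finSubLeft k).prodCongr (Equiv.prodComm _ _))
    (fun k p => u ^ ((p.1 : ℕ) * k.val)) ?_
  rintro k ⟨i, s, p⟩ ⟨j, t, q⟩
  simp only [Equiv.prodCongr_apply, Prod.map, Equiv.prodComm_apply, Prod.swap,
    tensor_zero_right_apply one_ne_zero, natCast_finSubLeft, dsumFam, shift, Matrix.of_apply]
  rw [show k - 1 - ((i : ℕ) : ZMod d) + 1 = k - (i : ℕ) by ring, ← sub_eq_add_neg]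
  simp only [sub_right_inj, natCast_fin_inj, eq_comm (a := j)]
  by_cases hij : i = j
  · subst hij
    by_cases hst : s = t
    · have hexp :
          ω ^ ((i : ℕ) * (k - 1).val) = ω ^ ((d - (i : ℕ)) % d) * ω ^ ((i : ℕ) * k.val) := by
        rw [← pow_add]
        refine pow_eq_pow_of_natCast_eq hω ?_
        push_cast [ZMod.natCast_mod, Nat.cast_sub i.is_lt.le, ZMod.natCast_self,
          ZMod.natCast_zmod_val]
        ring
      simp only [u, Units.val_pow_eq_pow_val, Units.val_ofPowEqOne, hexp, hst, and_self,
        if_true, Matrix.smul_apply, smul_eq_mul]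
      ring
    · simp [hst]
  · simp [hij]

end Tensor

section Reduction

open MvPowerSeries

variable {K : Type*} [Field K] {σ τ : Type*} {d n m : ℕ} (ζ : K)
  (φ : ZMod d → Matrix (Fin n) (Fin n) (MvPowerSeries σ K))
  (ψ : ZMod d → Matrix (Fin m) (Fin m) (MvPowerSeries τ K))

lemma tensor_incl_map_psProjR (hφ : Reduced φ) (k : ZMod d) :
    (tensor (MvPowerSeries.C ζ) (fun k => (φ k).map (psIncl σ τ))
        (fun k => (ψ k).map (psInclR σ τ)) k).map (psProjR σ τ) =
      tensor (MvPowerSeries.C ζ) 0 ψ k := by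
  rw [psProjR_eq_killCompl, tensor_map, killCompl_C, ← psProjR_eq_killCompl]
  congr 1
  · ext k p q
    simp [psProjR_psIncl, constantCoeff_eq_zero_of_mem_maximalIdeal (hφ k p q)]
  · ext k p q
    simp [psProjR_psInclR]

lemma tensor_incl_map_psProjL (hψ : Reduced ψ) (k : ZMod d) :
    (tensor (MvPowerSeries.C ζ) (fun k => (φ k).map (psIncl σ τ))
        (fun k => (ψ k).map (psInclR σ τ)) k).map (psProjL σ τ) =
      tensor (MvPowerSeries.C ζ) φ 0 k := by
  rw [psProjL_eq_killCompl, tensor_map, killCompl_C, ← psProjL_eq_killCompl]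
  congr 1
  · ext k p q
    simp [psProjL_psIncl]
  · ext k p q
    simp [psProjL_psInclR, constantCoeff_eq_zero_of_mem_maximalIdeal (hψ k p q)]

end Reduction

end MF

theorem tensor_mod_x_mod_y_general (K : Type*) [Field K] (a b d : ℕ) (hd : 2 ≤ d) (ζ : K)
    (hζ : ∏ i ∈ Finset.range d, (Polynomial.X - Polynomial.C (ζ ^ i)) =
      Polynomial.X ^ d - 1)
    (n m : ℕ)
    (φ : ZMod d → Matrix (Fin n) (Fin n) (MvPowerSeries (Fin a) K))
    (ψ : ZMod d → Matrix (Fin m) (Fin m) (MvPowerSeries (Fin b) K)) :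
    (MF.Reduced φ →
      MF.Iso
        (fun k : ZMod d =>
          ((MF.tensor (MvPowerSeries.C (σ := Fin a ⊕ Fin b) (R := K) ζ)
              (fun k' => (φ k').map (MF.psIncl (Fin a) (Fin b)))
              (fun k' => (ψ k').map (MF.psInclR (Fin a) (Fin b)))) k).map
            (MF.psProjR (Fin a) (Fin b)))
        (MF.dsumFam (fun i : Fin d =>
          MF.dsumFam (fun _ : Fin n => fun k : ZMod d =>
            (MvPowerSeries.C (σ := Fin b) (R := K) (ζ ^ (i : ℕ))) •
              MF.shift (-((i : ℕ) : ZMod d)) ψ k)))) ∧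
    (MF.Reduced ψ →
      MF.Iso
        (fun k : ZMod d =>
          ((MF.tensor (MvPowerSeries.C (σ := Fin a ⊕ Fin b) (R := K) ζ)
              (fun k' => (φ k').map (MF.psIncl (Fin a) (Fin b)))
              (fun k' => (ψ k').map (MF.psInclR (Fin a) (Fin b)))) k).map
            (MF.psProjL (Fin a) (Fin b)))
        (MF.dsumFam (fun i : Fin d =>
          MF.dsumFam (fun _ : Fin m => fun k : ZMod d =>
            (MvPowerSeries.C (σ := Fin a) (R := K) (ζ ^ ((d - (i : ℕ)) % d))) •
              MF.shift (-((i : ℕ) : ZMod d)) φ k)))) := by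
  constructor
  · intro hφ
    simp only [MF.tensor_incl_map_psProjR ζ φ ψ hφ, MF.tensor_zero_left, map_pow]
    exact MF.iso_refl _
  · intro hψ
    have hζd : MvPowerSeries.C (σ := Fin a) (R := K) ζ ^ d = 1 := by
      rw [← map_pow, pow_eq_one_of_prod_X_sub_C_pow_eq hd hζ, map_one]
    simpa only [MF.tensor_incl_map_psProjL ζ φ ψ hψ, map_pow] using
      MF.iso_tensor_zero_right hd hζd φ

/-- reduction of a tensor product modulo the variables of one factor
(Proposition 5.2). -/
theorem tensor_mod_x_mod_y (K : Type*) [Field K] (a b d : ℕ) (hd : 2 ≤ d) (ζ : K)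
    (hζ : ∏ i ∈ Finset.range d, (Polynomial.X - Polynomial.C (ζ ^ i)) =
      Polynomial.X ^ d - 1)
    (f : MvPowerSeries (Fin a) K) (hf0 : f ≠ 0) (hf : ¬IsUnit f)
    (g : MvPowerSeries (Fin b) K) (hg0 : g ≠ 0) (hg : ¬IsUnit g)
    (n m : ℕ)
    (φ : ZMod d → Matrix (Fin n) (Fin n) (MvPowerSeries (Fin a) K))
    (hφ : MF.IsMF d f φ)
    (ψ : ZMod d → Matrix (Fin m) (Fin m) (MvPowerSeries (Fin b) K))
    (hψ : MF.IsMF d g ψ) :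
    (MF.Reduced φ →
      MF.Iso
        (fun k : ZMod d =>
          ((MF.tensor (MvPowerSeries.C (σ := Fin a ⊕ Fin b) (R := K) ζ)
              (fun k' => (φ k').map (MF.psIncl (Fin a) (Fin b)))
              (fun k' => (ψ k').map (MF.psInclR (Fin a) (Fin b)))) k).map
            (MF.psProjR (Fin a) (Fin b)))
        (MF.dsumFam (fun i : Fin d =>
          MF.dsumFam (fun _ : Fin n => fun k : ZMod d =>
            (MvPowerSeries.C (σ := Fin b) (R := K) (ζ ^ (i : ℕ))) •
              MF.shift (-((i : ℕ) : ZMod d)) ψ k)))) ∧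
    (MF.Reduced ψ →
      MF.Iso
        (fun k : ZMod d =>
          ((MF.tensor (MvPowerSeries.C (σ := Fin a ⊕ Fin b) (R := K) ζ)
              (fun k' => (φ k').map (MF.psIncl (Fin a) (Fin b)))
              (fun k' => (ψ k').map (MF.psInclR (Fin a) (Fin b)))) k).map
            (MF.psProjL (Fin a) (Fin b)))
        (MF.dsumFam (fun i : Fin d =>
          MF.dsumFam (fun _ : Fin m => fun k : ZMod d =>
            (MvPowerSeries.C (σ := Fin a) (R := K) (ζ ^ ((d - (i : ℕ)) % d))) •
              MF.shift (-((i : ℕ) : ZMod d)) φ k)))) :=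
  tensor_mod_x_mod_y_general K a b d hd ζ hζ n m φ ψ
end

section
/- Let (Q,𝔪) be a Noetherian local ring, d ≥ 2 an integer, ζ ∈ Q with ∏_{i=0}^{d-1}(t − ζ^i) = t^d − 1 in Q[t], and f ∈ 𝔪 a nonzerodivisor. Suppose f can be written as f = ∑_{i=1}^N f_{i1} f_{i2} ⋯ f_{id} with N ≥ 2 and all f_{ij} ∈ 𝔪. Then there exists a reduced d-fold matrix factorization (φ_1,…,φ_{d-1},φ_0) of f of rank d^{N-1} such that det φ_k = ± f^{d^{N-2}} for every k ∈ ℤ/d (the sign ε ∈ {1,−1} is independent of k). -/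
open Matrix Polynomial
open scoped Kronecker

/-!
Split `f = f₁ + h` with `f₁ = ∏ⱼ f_{1j}`; by induction on `N`, `h` has a `d`-fold factorization
`ψ` with entries in `𝔪`. Take `φ_k` to be the `d × d` block matrix whose diagonal blocks are
`ζ^p ψ_{k-p}` and whose cyclic superdiagonal carries the scalars `f_{1p}`. Writing
`φ_k = D_k + A` with `A` the weighted cyclic shift, one has `A D_k = ζ D_{k-1} A`, so the cyclic
product of the `φ_k` expands by the noncommutative `q`-binomial theorem. Because
`1, ζ, …, ζ^{d-1}` are exactly the roots of `t^d - 1`, the Gaussian binomials `[d, j]_ζ` vanish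
for `0 < j < d`, leaving `D_k ⋯ D_{k+d-1} + A^d = (h + f₁) • 1`.
For the determinant, block elimination shows that a block-cyclic matrix with diagonal blocks
`D_p` and superdiagonal scalars `c_p` has determinant `det (D_{d-1} ⋯ D_0 - ∏ (-c_p))`; here
this is `det ((-1)^{d-1} f • 1)`.
-/

namespace MF

open Finset

section ZModIndex

variable (d : ℕ) [NeZero d]

def valEquiv : ZMod d ≃ Fin d where
  toFun z := ⟨z.val, z.val_lt⟩
  invFun i := (i : ℕ)
  left_inv := ZMod.natCast_zmod_val
  right_inv i := Fin.ext (ZMod.val_cast_of_lt i.isLt)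

variable {d}

lemma prod_zmod_val {M : Type*} [CommMonoid M] (g : ℕ → M) :
    ∏ z : ZMod d, g z.val = ∏ t ∈ range d, g t := by
  rw [← Fin.prod_univ_eq_prod_range]
  exact (valEquiv d).prod_comp fun i => g i

lemma prod_range_natCast {M : Type*} [CommMonoid M] (g : ZMod d → M) :
    ∏ t ∈ range d, g t = ∏ z, g z := by
  rw [← prod_zmod_val]
  simp only [ZMod.natCast_zmod_val]

lemma val_add_one_of_lt {s : ZMod d} (h : s.val + 1 < d) : (s + 1).val = s.val + 1 := by
  rw [← ZMod.natCast_zmod_val s, ← Nat.cast_add_one, ZMod.val_cast_of_lt h,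
    ZMod.val_natCast_of_lt s.val_lt]

lemma add_one_eq_zero_of_val_add_one_eq {s : ZMod d} (h : s.val + 1 = d) : s + 1 = 0 := by
  rw [← ZMod.natCast_zmod_val s, ← Nat.cast_add_one, h, ZMod.natCast_self]

end ZModIndex

section OrderedProduct

variable {d : ℕ} {M : Type*} [Monoid M]

def ascProd (Φ : ZMod d → M) : ℕ → ZMod d → M
  | 0, _ => 1
  | r + 1, k => ascProd Φ r k * Φ (k + r)

@[simp] lemma ascProd_zero (Φ : ZMod d → M) (k : ZMod d) : ascProd Φ 0 k = 1 := rfl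

lemma ascProd_succ (Φ : ZMod d → M) (r : ℕ) (k : ZMod d) :
    ascProd Φ (r + 1) k = ascProd Φ r k * Φ (k + r) := rfl

lemma ascProd_succ' (Φ : ZMod d → M) : ∀ (r : ℕ) (k : ZMod d),
    ascProd Φ (r + 1) k = Φ k * ascProd Φ r (k + 1)
  | 0, k => by simp [ascProd_succ]
  | r + 1, k => by
      rw [ascProd_succ, ascProd_succ' Φ r k, ascProd_succ, mul_assoc, Nat.cast_succ,
        add_comm (r : ZMod d) 1, add_assoc]

lemma ofFn_prod_eq_ascProd (Φ : ZMod d → M) : ∀ (r : ℕ) (k : ZMod d),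
    (List.ofFn fun i : Fin r => Φ (k + (i : ℕ))).prod = ascProd Φ r k
  | 0, _ => rfl
  | r + 1, k => by
      rw [List.ofFn_succ', List.prod_concat, ascProd_succ, ← ofFn_prod_eq_ascProd Φ r k]
      rfl

lemma cycProd_eq_ascProd {Q ι : Type*} [CommRing Q] [Fintype ι] [DecidableEq ι]
    (φ : ZMod d → Matrix ι ι Q) (k : ZMod d) : cycProd φ k = ascProd φ d k :=
  ofFn_prod_eq_ascProd φ d k

lemma map_ascProd {N : Type*} [Monoid N] (f : M →* N) (Φ : ZMod d → M) :
    ∀ (r : ℕ) (k : ZMod d), f (ascProd Φ r k) = ascProd (fun i => f (Φ i)) r k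
  | 0, _ => map_one f
  | r + 1, k => by rw [ascProd_succ, map_mul, map_ascProd f Φ r k, ascProd_succ]

lemma ascProd_eq_prod_range {M : Type*} [CommMonoid M] (Φ : ZMod d → M) :
    ∀ (r : ℕ) (k : ZMod d), ascProd Φ r k = ∏ t ∈ range r, Φ (k + t)
  | 0, _ => rfl
  | r + 1, k => by rw [ascProd_succ, ascProd_eq_prod_range Φ r k, prod_range_succ]

lemma ascProd_eq_prod [NeZero d] {M : Type*} [CommMonoid M] (Φ : ZMod d → M) (k : ZMod d) :
    ascProd Φ d k = ∏ z, Φ z := by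
  rw [ascProd_eq_prod_range, prod_range_natCast fun z => Φ (k + z)]
  exact Equiv.prod_comp (Equiv.addLeft k) Φ

end OrderedProduct

section GaussianBinomial

variable {R : Type*} [CommRing R]

def qBinom (ζ : R) : ℕ → ℕ → R
  | _, 0 => 1
  | 0, _ + 1 => 0
  | r + 1, j + 1 => ζ ^ (j + 1) * qBinom ζ r (j + 1) + qBinom ζ r j

variable (ζ : R)

@[simp] lemma qBinom_zero_right (r : ℕ) : qBinom ζ r 0 = 1 := by cases r <;> rfl

lemma qBinom_succ_succ (r j : ℕ) :
    qBinom ζ (r + 1) (j + 1) = ζ ^ (j + 1) * qBinom ζ r (j + 1) + qBinom ζ r j := rfl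

lemma qBinom_of_lt : ∀ {r j : ℕ}, r < j → qBinom ζ r j = 0
  | 0, _ + 1, _ => rfl
  | r + 1, j + 1, h => by
      rw [qBinom_succ_succ, qBinom_of_lt (by omega), qBinom_of_lt (by omega), mul_zero, add_zero]

@[simp] lemma qBinom_self : ∀ r : ℕ, qBinom ζ r r = 1
  | 0 => rfl
  | r + 1 => by
      rw [qBinom_succ_succ, qBinom_of_lt ζ (Nat.lt_succ_self r), qBinom_self r, mul_zero, zero_add]

lemma esymm_cons_succ (a : R) (s : Multiset R) (j : ℕ) :
    (a ::ₘ s).esymm (j + 1) = s.esymm (j + 1) + a * s.esymm j := by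
  simp [Multiset.esymm, Multiset.powersetCard_cons, Multiset.sum_map_mul_left]

lemma multiset_range_succ_eq_zero_cons (r : ℕ) :
    Multiset.range (r + 1) = 0 ::ₘ (Multiset.range r).map Nat.succ := by
  rw [← Multiset.coe_range, List.range_succ_eq_map, ← Multiset.cons_coe, ← Multiset.map_coe,
    Multiset.coe_range]

lemma esymm_map_pow_range : ∀ r j : ℕ,
    ((Multiset.range r).map (ζ ^ ·)).esymm j = ζ ^ j.choose 2 * qBinom ζ r j
  | r, 0 => by simp [Multiset.esymm]
  | 0, j + 1 => by simp [Multiset.esymm, Multiset.powersetCard_zero_right, qBinom]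
  | r + 1, j + 1 => by
      have hmap : (Multiset.range (r + 1)).map (ζ ^ ·) =
          1 ::ₘ ((Multiset.range r).map (ζ ^ ·)).map (ζ • ·) := by
        rw [multiset_range_succ_eq_zero_cons]
        simp [pow_succ']
      rw [hmap, esymm_cons_succ, one_mul, ← Multiset.pow_smul_esymm, ← Multiset.pow_smul_esymm,
        esymm_map_pow_range r, esymm_map_pow_range r, qBinom_succ_succ, Nat.choose_succ_succ',
        Nat.choose_one_right]
      simp only [smul_eq_mul]
      ring

end GaussianBinomial

section RootsOfUnity

variable {R : Type*} [CommRing R] {d : ℕ} {ζ : R}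
  (hζ : ∏ i ∈ range d, (X - C (ζ ^ i)) = X ^ d - 1)
include hζ

lemma pow_eq_one_of_prod_X_sub_C (hd : 2 ≤ d) : ζ ^ d = 1 := by
  have h := congrArg (eval ζ) hζ
  rw [eval_prod, prod_eq_zero (mem_range.2 hd) (by simp)] at h
  simp only [eval_sub, eval_pow, eval_X, eval_one] at h
  exact sub_eq_zero.1 h.symm

lemma prod_range_pow_of_prod_X_sub_C (hd : d ≠ 0) : ∏ t ∈ range d, ζ ^ t = (-1) ^ (d - 1) := by
  have h := congrArg (eval 0) hζ
  simp only [eval_prod, eval_sub, eval_X, eval_C, zero_sub, prod_neg, card_range, eval_pow,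
    eval_one, zero_pow hd] at h
  obtain ⟨e, rfl⟩ := Nat.exists_eq_add_of_le' (Nat.pos_of_ne_zero hd)
  have hsq : ((-1 : R) ^ e) ^ 2 = 1 := by rw [← pow_mul, pow_mul', neg_one_sq, one_pow]
  rw [Nat.add_sub_cancel]
  linear_combination (-(-1 : R) ^ e) * h - (∏ t ∈ range (e + 1), ζ ^ t) * hsq

lemma qBinom_eq_zero_of_prod_X_sub_C {j : ℕ} (hj0 : 0 < j) (hjd : j < d) :
    qBinom ζ d j = 0 := by
  set s := (Multiset.range d).map (ζ ^ ·)
  have hcard : Multiset.card s = d := by simp [s]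
  have hcoeff := Multiset.prod_X_sub_C_coeff s (k := d - j) (by omega)
  have hprod : (s.map fun t => X - C t).prod = X ^ d - 1 := by
    rw [← hζ, prod_eq_multiset_prod, range_val, Multiset.map_map]
    rfl
  rw [hprod, hcard, show d - (d - j) = j by omega, coeff_sub, coeff_X_pow, coeff_one,
    if_neg (by omega), if_neg (by omega), sub_zero] at hcoeff
  have hunit : IsUnit ζ :=
    IsUnit.of_pow_eq_one (pow_eq_one_of_prod_X_sub_C hζ (by omega)) (by omega)
  have hesymm : s.esymm j = 0 :=
    (((isUnit_neg_one (α := R)).pow _).mul_right_eq_zero).1 hcoeff.symm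
  rwa [esymm_map_pow_range, (hunit.pow _).mul_right_eq_zero] at hesymm

end RootsOfUnity

section QBinomialExpansion

variable {Q R : Type*} [CommRing Q] [Ring R] [Algebra Q R] {d : ℕ}
  {x : ZMod d → R} {y : R} {ζ : Q} (hxy : ∀ k, y * x k = ζ • (x (k - 1) * y))
include hxy

lemma pow_mul_eq_smul_mul_pow (j : ℕ) (k : ZMod d) :
    y ^ j * x k = ζ ^ j • (x (k - j) * y ^ j) := by
  induction j generalizing k with
  | zero => simp
  | succ j ih =>
      rw [pow_succ, mul_assoc, hxy, mul_smul_comm, ← mul_assoc, ih, smul_mul_assoc, smul_smul,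
        mul_assoc, ← pow_succ, ← pow_succ', Nat.cast_succ, sub_sub, add_comm (1 : ZMod d)]

lemma ascProd_add_eq_sum : ∀ (r : ℕ) (k : ZMod d), ascProd (fun i => x i + y) r k =
    ∑ j ∈ range (r + 1), qBinom ζ r j • (ascProd x (r - j) k * y ^ j)
  | 0, k => by simp
  | r + 1, k => by
      have hterm : ∀ j ∈ range (r + 1),
          qBinom ζ r j • (ascProd x (r - j) k * y ^ j) * (x (k + r) + y) =
            (ζ ^ j * qBinom ζ r j) • (ascProd x (r + 1 - j) k * y ^ j) +
              qBinom ζ r j • (ascProd x (r + 1 - (j + 1)) k * y ^ (j + 1)) := by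
        intro j hj
        have hjr : j ≤ r := Nat.lt_succ_iff.1 (mem_range.1 hj)
        rw [mul_add, smul_mul_assoc, smul_mul_assoc, mul_assoc, pow_mul_eq_smul_mul_pow hxy,
          mul_smul_comm, smul_smul, mul_comm (qBinom ζ r j), ← mul_assoc, Nat.sub_add_comm hjr,
          ascProd_succ, Nat.cast_sub hjr, add_sub_assoc, Nat.add_sub_add_right, pow_succ y j]
        simp only [mul_assoc]
      have hlast : ∑ j ∈ range (r + 1),
          (ζ ^ j * qBinom ζ r j) • (ascProd x (r + 1 - j) k * y ^ j) = ∑ j ∈ range (r + 2),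
          (ζ ^ j * qBinom ζ r j) • (ascProd x (r + 1 - j) k * y ^ j) := by
        rw [sum_range_succ _ (r + 1), qBinom_of_lt ζ (Nat.lt_succ_self r), mul_zero, zero_smul,
          add_zero]
      rw [ascProd_succ, ascProd_add_eq_sum r k, sum_mul, sum_congr rfl hterm, sum_add_distrib,
        hlast, sum_range_succ' _ (r + 1), sum_range_succ' _ (r + 1)]
      simp only [qBinom_succ_succ, add_smul, sum_add_distrib, qBinom_zero_right, pow_zero,
        one_mul]
      abel

lemma ascProd_add_card_eq_add_pow [NeZero d]
    (hζ : ∏ i ∈ range d, (X - C (ζ ^ i)) = X ^ d - 1) (k : ZMod d) :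
    ascProd (fun i => x i + y) d k = ascProd x d k + y ^ d := by
  rw [ascProd_add_eq_sum hxy, sum_range_succ, sum_eq_single 0]
  · simp
  · intro j hj hj0
    rw [qBinom_eq_zero_of_prod_X_sub_C hζ (Nat.pos_of_ne_zero hj0) (mem_range.1 hj), zero_smul]
  · exact fun h => absurd (mem_range.2 (Nat.pos_of_neZero d)) h

end QBinomialExpansion

lemma blockDiagonal_mul_apply {S ι o κ : Type*} [Semiring S] [Fintype ι] [Fintype o]
    [DecidableEq o] (D : o → Matrix ι ι S) (N : Matrix (ι × o) κ S) (i : ι) (s : o) (z : κ) :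
    (Matrix.blockDiagonal D * N) (i, s) z = ∑ l, D s i l * N (l, s) z := by
  rw [Matrix.mul_apply, Fintype.sum_prod_type]
  refine sum_congr rfl fun l _ => ?_
  rw [sum_eq_single s] <;> simp +contextual [Matrix.blockDiagonal_apply, eq_comm]

section BlockShift

variable {S : Type*} [CommRing S] {ι : Type*} [Fintype ι] [DecidableEq ι] {d : ℕ}

def shiftMat (c : ZMod d → S) : Matrix (ι × ZMod d) (ι × ZMod d) S :=
  Matrix.of fun x y => if y = (x.1, x.2 + 1) then c x.2 else 0

variable [NeZero d]

lemma shiftMat_mul_apply {κ : Type*} (c : ZMod d → S) (N : Matrix (ι × ZMod d) κ S)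
    (x : ι × ZMod d) (z : κ) : (shiftMat (ι := ι) c * N) x z = c x.2 * N (x.1, x.2 + 1) z := by
  rw [Matrix.mul_apply, sum_eq_single (x.1, x.2 + 1)]
  · simp [shiftMat]
  · intro y _ hy
    simp [shiftMat, hy]
  · simp

lemma shiftMat_mul_blockDiagonal (c : ZMod d → S) (F : ZMod d → Matrix ι ι S) :
    shiftMat c * Matrix.blockDiagonal F =
      Matrix.blockDiagonal (fun p => F (p + 1)) * shiftMat (ι := ι) c := by
  ext ⟨i, s⟩ z
  rw [shiftMat_mul_apply, blockDiagonal_mul_apply, sum_eq_single z.1]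
  · simp only [shiftMat, Matrix.of_apply, Matrix.blockDiagonal_apply]
    by_cases h : z.2 = s + 1
    · simp [h, Prod.ext_iff, mul_comm]
    · simp [h, Prod.ext_iff, Ne.symm h]
  · intro l _ hl
    simp [shiftMat, Prod.ext_iff, Ne.symm hl]
  · simp

lemma shiftMat_pow_apply (c : ZMod d → S) (j : ℕ) (x z : ι × ZMod d) :
    (shiftMat (ι := ι) c ^ j) x z = if z = (x.1, x.2 + j) then ascProd c j x.2 else 0 := by
  induction j generalizing x with
  | zero => simp [Matrix.one_apply, eq_comm]
  | succ j ih =>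
      rw [pow_succ', shiftMat_mul_apply, ih, ascProd_succ', Nat.cast_succ, add_comm (j : ZMod d),
        add_assoc]
      split_ifs <;> simp

lemma shiftMat_pow_card (c : ZMod d → S) :
    shiftMat (ι := ι) c ^ d = (∏ z, c z) • (1 : Matrix (ι × ZMod d) (ι × ZMod d) S) := by
  ext x z
  rw [shiftMat_pow_apply, ZMod.natCast_self, add_zero, ascProd_eq_prod, Matrix.smul_apply,
    Matrix.one_apply]
  split_ifs <;> simp_all [eq_comm]

end BlockShift

section CyclicDeterminant

variable {S : Type*} [CommRing S] {ι : Type*} [Fintype ι] [DecidableEq ι] {d : ℕ}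
  (D : ZMod d → Matrix ι ι S) (c : ZMod d → S)

def descProd : ℕ → Matrix ι ι S
  | 0 => 1
  | r + 1 => D r * descProd r

def blockCyclic : Matrix (ι × ZMod d) (ι × ZMod d) S := Matrix.blockDiagonal D + shiftMat c

/-- Right multiplication by this block upper-triangular matrix makes `blockCyclic D c` block
lower-triangular, with diagonal blocks `descProd D (s + 1)`, corrected by `∏ (-c)` in the last
one. -/
def elimMat : Matrix (ι × ZMod d) (ι × ZMod d) S :=
  Matrix.of fun x y => if x.2.val ≤ y.2.val then
    (∏ u ∈ Ico x.2.val y.2.val, -c u) * descProd D x.2.val x.1 y.1 else 0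

lemma map_descProd {S' : Type*} [CommRing S'] (f : S →+* S') :
    ∀ r, (descProd D r).map f = descProd (fun p => (D p).map f) r
  | 0 => Matrix.map_one f (map_zero f) (map_one f)
  | r + 1 => by rw [descProd, Matrix.map_mul, map_descProd f r, descProd]

omit [Fintype ι] in
lemma map_blockCyclic {S' : Type*} [CommRing S'] (f : S →+* S') :
    (blockCyclic D c).map f = blockCyclic (fun p => (D p).map f) (fun p => f (c p)) := by
  ext x y
  simp [blockCyclic, shiftMat, Matrix.blockDiagonal_apply, apply_ite f]

lemma map_eval_zero_charmatrix_neg (A : Matrix ι ι S) : (charmatrix (-A)).map (eval 0) = A := by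
  ext i j
  by_cases h : i = j <;> simp [h]

variable [NeZero d]

lemma det_of_blockTriangular_val (M : Matrix (ι × ZMod d) (ι × ZMod d) S)
    (hM : ∀ i j s t, t.val < s.val → M (i, s) (j, t) = 0) :
    M.det = ∏ s : ZMod d, (Matrix.of fun i j => M (i, s) (j, s)).det := by
  have hb : M.BlockTriangular fun x => valEquiv d x.2 := fun x y h => hM _ _ _ _ h
  rw [hb.det_fintype, ← (valEquiv d).prod_comp]
  refine prod_congr rfl fun s _ => ?_
  let e : ι ≃ {x : ι × ZMod d // valEquiv d x.2 = valEquiv d s} :=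
    { toFun i := ⟨(i, s), rfl⟩
      invFun x := x.1.1
      left_inv _ := rfl
      right_inv x := Subtype.ext (Prod.ext rfl ((valEquiv d).injective x.2).symm) }
  rw [← Matrix.det_submatrix_equiv_self e]
  rfl

lemma descProd_val_succ (s : ZMod d) : descProd D (s.val + 1) = D s * descProd D s.val := by
  rw [descProd, ZMod.natCast_zmod_val]

lemma det_elimMat : (elimMat D c).det = ∏ t ∈ range d, (descProd D t).det := by
  rw [det_of_blockTriangular_val _ fun i j s t h => by simp [elimMat, not_le.2 h],
    ← prod_zmod_val fun t => (descProd D t).det]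
  simp [elimMat]
  rfl

lemma mul_elimMat_apply (i j : ι) (s t : ZMod d) :
    (blockCyclic D c * elimMat D c) (i, s) (j, t) =
      (if s.val ≤ t.val then (∏ u ∈ Ico s.val t.val, -c u) * descProd D (s.val + 1) i j
        else 0) + c s * elimMat D c (i, s + 1) (j, t) := by
  rw [blockCyclic, add_mul, Matrix.add_apply, blockDiagonal_mul_apply, shiftMat_mul_apply]
  congr 1
  split_ifs with h
  · simp only [elimMat, Matrix.of_apply, if_pos h, descProd_val_succ, Matrix.mul_apply, mul_sum]
    exact sum_congr rfl fun l _ => by ring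
  · simp [elimMat, h]

lemma mul_elimMat_apply_of_lt (i j : ι) {s t : ZMod d} (h : s.val < t.val) :
    (blockCyclic D c * elimMat D c) (i, s) (j, t) = 0 := by
  have hs : (s + 1).val = s.val + 1 := val_add_one_of_lt (by have := t.val_lt; omega)
  rw [mul_elimMat_apply, if_pos h.le]
  simp only [elimMat, Matrix.of_apply, hs, if_pos (Nat.succ_le_of_lt h)]
  rw [prod_eq_prod_Ico_succ_bot h, ZMod.natCast_zmod_val]
  ring

lemma mul_elimMat_apply_self (i j : ι) (s : ZMod d) :
    (blockCyclic D c * elimMat D c) (i, s) (j, s) =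
      (descProd D (s.val + 1) - if s.val + 1 = d then (∏ z, -c z) • 1 else 0) i j := by
  rw [mul_elimMat_apply, if_pos le_rfl, Ico_self, prod_empty, one_mul]
  by_cases hs : s.val + 1 = d
  · have hprod : ∏ z, -c z = (∏ u ∈ Ico 0 s.val, -c u) * -c s := by
      rw [← prod_range_natCast, ← range_eq_Ico, show range d = range (s.val + 1) by rw [hs],
        prod_range_succ, ZMod.natCast_zmod_val]
    simp only [add_one_eq_zero_of_val_add_one_eq hs, if_pos hs, elimMat, Matrix.of_apply,
      ZMod.val_zero, zero_le, if_true, descProd, hprod, Matrix.sub_apply, Matrix.smul_apply,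
      smul_eq_mul]
    ring
  · have hlt : s.val + 1 < d := lt_of_le_of_ne s.val_lt hs
    simp [if_neg hs, elimMat, val_add_one_of_lt hlt]

lemma det_blockCyclic_mul_prod :
    (blockCyclic D c).det * ∏ t ∈ range d, (descProd D t).det =
      (descProd D d - (∏ z, -c z) • 1).det * ∏ t ∈ range d, (descProd D t).det := by
  have hblock : ∀ s : ZMod d,
      (Matrix.of fun i j => (blockCyclic D c * elimMat D c)ᵀ (i, s) (j, s)) =
        (descProd D (s.val + 1) - if s.val + 1 = d then (∏ z, -c z) • 1 else 0)ᵀ := fun s => by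
    ext i j
    simp [mul_elimMat_apply_self]
  rw [← det_elimMat D c, ← Matrix.det_mul, ← Matrix.det_transpose,
    det_of_blockTriangular_val _ fun i j s t h => mul_elimMat_apply_of_lt D c j i h]
  simp_rw [hblock, Matrix.det_transpose]
  rw [det_elimMat, prod_zmod_val fun t =>
    (descProd D (t + 1) - if t + 1 = d then (∏ z, -c z) • 1 else 0).det]
  obtain ⟨e, rfl⟩ := Nat.exists_eq_add_of_le' (Nat.pos_of_neZero d)
  rw [prod_range_succ, prod_range_succ', if_pos rfl]
  rw [show descProd D 0 = 1 from rfl, Matrix.det_one, mul_one, mul_comm]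
  congr 1
  refine prod_congr rfl fun t ht => ?_
  rw [if_neg (by simp at ht; omega), sub_zero]

theorem det_blockCyclic : (blockCyclic D c).det = (descProd D d - (∏ z, -c z) • 1).det := by
  -- Over `S[X]` the blocks `charmatrix (-D p)` have monic, hence regular, determinants, so the
  -- factor `∏ det (descProd D t)` cancels; evaluating at `0` recovers `D`.
  set D' : ZMod d → Matrix ι ι S[X] := fun p => charmatrix (-D p)
  have hmonic : ∀ t, (descProd D' t).det.Monic := by
    intro t
    induction t with
    | zero => simp [descProd]
    | succ t ih => rw [descProd, Matrix.det_mul]; exact (charpoly_monic _).mul ih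
  have hreg : IsRegular (∏ t ∈ range d, (descProd D' t).det) :=
    (monic_prod_of_monic _ _ fun t _ => hmonic t).isRegular
  have key := congrArg (evalRingHom 0)
    (hreg.right (det_blockCyclic_mul_prod D' fun p => C (c p)))
  rw [RingHom.map_det, RingHom.map_det, RingHom.mapMatrix_apply, RingHom.mapMatrix_apply,
    map_blockCyclic, Matrix.map_sub _ (map_sub _), map_descProd] at key
  simpa [D', map_eval_zero_charmatrix_neg, Matrix.smul_one_eq_diagonal, eval_prod] using key

end CyclicDeterminant

lemma addChar_pow_card_eq_one {M : Type*} [Monoid M] {d : ℕ} (χ : AddChar (ZMod d) M)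
    (p : ZMod d) : χ p ^ d = 1 := by
  rw [← AddChar.map_nsmul_eq_pow, nsmul_eq_mul, ZMod.natCast_self, zero_mul,
    AddChar.map_zero_eq_one]

section TensorScalar

variable {Q : Type*} [CommRing Q] {ι : Type*} [Fintype ι] [DecidableEq ι] {d : ℕ}
  (χ : AddChar (ZMod d) Q) (ψ : ZMod d → Matrix ι ι Q) (a : ZMod d → Q)

/-- The tensor product `(a) ⊗_ζ ψ` of the rank-one factorization `(a_p)_p` with `ψ` (compare
`MF.tensor`), with `ζ ^ p` written as `χ p` for an additive character `χ` of `ZMod d`. -/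
def tensorScalar (k : ZMod d) : Matrix (ι × ZMod d) (ι × ZMod d) Q :=
  blockCyclic (fun p => χ p • ψ (k - p)) a

lemma descProd_twist (k : ZMod d) : ∀ r : ℕ,
    descProd (fun p => χ p • ψ (k - p)) r = (∏ t ∈ range r, χ t) • ascProd ψ r (k + 1 - r)
  | 0 => by simp [descProd]
  | r + 1 => by
      rw [descProd, descProd_twist k r, smul_mul_smul_comm, prod_range_succ, mul_comm (χ r),
        Nat.cast_succ, show k + 1 - (r + 1 : ZMod d) = k - r by ring, ascProd_succ',
        sub_add_eq_add_sub]

omit [Fintype ι] in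
lemma tensorScalar_apply_mem {I : Ideal Q} (hψ : ∀ k p q, ψ k p q ∈ I) (ha : ∀ z, a z ∈ I)
    (k : ZMod d) (x y : ι × ZMod d) : tensorScalar χ ψ a k x y ∈ I := by
  simp only [tensorScalar, blockCyclic, shiftMat, Matrix.add_apply, Matrix.blockDiagonal_apply,
    Matrix.of_apply, Matrix.smul_apply, smul_eq_mul]
  exact I.add_mem (by split_ifs <;> simp [I.mul_mem_left _ (hψ _ _ _)])
    (by split_ifs <;> simp [ha])

variable [NeZero d]

lemma shiftMat_mul_blockDiagonal_twist (k : ZMod d) :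
    shiftMat a * Matrix.blockDiagonal (fun p => χ p • ψ (k - p)) =
      χ 1 • (Matrix.blockDiagonal (fun p => χ p • ψ (k - 1 - p)) * shiftMat a) := by
  rw [shiftMat_mul_blockDiagonal, ← smul_mul_assoc, ← Matrix.blockDiagonal_smul]
  congr 2
  funext p
  rw [Pi.smul_apply, smul_smul, AddChar.map_add_eq_mul, mul_comm, sub_sub, add_comm 1 p]

lemma ascProd_blockDiagonal_twist : ∀ (r : ℕ) (k : ZMod d),
    ascProd (fun k => Matrix.blockDiagonal fun p => χ p • ψ (k - p)) r k =
      Matrix.blockDiagonal fun p => χ p ^ r • ascProd ψ r (k - p)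
  | 0, k => by
      simp only [ascProd_zero, pow_zero, one_smul]
      exact Matrix.blockDiagonal_one.symm
  | r + 1, k => by
      rw [ascProd_succ, ascProd_blockDiagonal_twist r k, ← Matrix.blockDiagonal_mul]
      congr 1
      funext p
      rw [smul_mul_smul_comm, ← pow_succ, ascProd_succ, sub_add_eq_add_sub]

variable {χ ψ} (hχ : ∏ i ∈ range d, (X - C (χ 1 ^ i)) = X ^ d - 1) {g : Q} (hψ : IsMF d g ψ)
include hχ hψ

theorem IsMF.tensorScalar : IsMF d (∏ z, a z + g) (tensorScalar χ ψ a) := by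
  intro k
  rw [cycProd_eq_ascProd]
  change ascProd (fun k => Matrix.blockDiagonal (fun p => χ p • ψ (k - p)) + shiftMat a) d k = _
  rw [ascProd_add_card_eq_add_pow (shiftMat_mul_blockDiagonal_twist χ ψ a) hχ,
    ascProd_blockDiagonal_twist, shiftMat_pow_card]
  have hblock : ∀ p, χ p ^ d • ascProd ψ d (k - p) = g • 1 := fun p => by
    rw [addChar_pow_card_eq_one, one_smul, ← cycProd_eq_ascProd, hψ]
  simp_rw [hblock]
  rw [show (fun _ : ZMod d => g • (1 : Matrix ι ι Q)) = g • 1 from rfl,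
    Matrix.blockDiagonal_smul, Matrix.blockDiagonal_one, add_smul, add_comm]

theorem det_tensorScalar (k : ZMod d) :
    (tensorScalar χ ψ a k).det = ((-1) ^ (d - 1) * (∏ z, a z + g)) ^ Fintype.card ι := by
  have hχt : ∀ t : ℕ, χ t = χ 1 ^ t := fun t => by rw [← AddChar.map_nsmul_eq_pow, nsmul_one]
  rw [tensorScalar, det_blockCyclic, descProd_twist, ZMod.natCast_self, sub_zero,
    ← cycProd_eq_ascProd, hψ, smul_smul]
  simp_rw [hχt]
  rw [prod_range_pow_of_prod_X_sub_C hχ (NeZero.ne d), prod_neg, card_univ, ZMod.card,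
    ← sub_smul, Matrix.det_smul, Matrix.det_one, mul_one]
  obtain ⟨e, rfl⟩ := Nat.exists_eq_add_of_le' (Nat.pos_of_neZero d)
  rw [Nat.add_sub_cancel, pow_succ]
  ring

end TensorScalar

section Construction

variable {Q : Type*} [CommRing Q] {d : ℕ}

theorem IsMF.reindex {ι κ : Type*} [Fintype ι] [DecidableEq ι] [Fintype κ] [DecidableEq κ]
    {f : Q} {φ : ZMod d → Matrix ι ι Q} (h : IsMF d f φ) (e : ι ≃ κ) :
    IsMF d f fun k => Matrix.reindex e e (φ k) := by
  intro k
  have hmap := map_ascProd (Matrix.reindexAlgEquiv Q Q e : Matrix ι ι Q →* Matrix κ κ Q) φ d k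
  rw [← cycProd_eq_ascProd, h k, MonoidHom.coe_coe, map_smul, map_one] at hmap
  rw [cycProd_eq_ascProd, hmap]
  rfl

lemma isMF_smul_one {ι : Type*} [Fintype ι] [DecidableEq ι] [NeZero d] (a : ZMod d → Q) :
    IsMF d (∏ z, a z) fun k => a k • (1 : Matrix ι ι Q) := by
  intro k
  have hmap := map_ascProd (algebraMap Q (Matrix ι ι Q) : Q →* Matrix ι ι Q) a d k
  rw [ascProd_eq_prod, MonoidHom.coe_coe] at hmap
  simp only [Algebra.algebraMap_eq_smul_one] at hmap
  rw [cycProd_eq_ascProd, hmap]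

def finPowSuccEquiv (d n : ℕ) [NeZero d] : Fin (d ^ n) × ZMod d ≃ Fin (d ^ (n + 1)) :=
  (Equiv.prodCongr (Equiv.refl _) (valEquiv d)).trans
    (finProdFinEquiv.trans (finCongr (pow_succ d n).symm))

variable (hd : 2 ≤ d) {ζ : Q} (hζ : ∏ i ∈ range d, (X - C (ζ ^ i)) = X ^ d - 1)
include hd hζ

theorem exists_isMF_pow_succ {I : Ideal Q} {n : ℕ} {g : Q}
    {ψ : ZMod d → Matrix (Fin (d ^ n)) (Fin (d ^ n)) Q} (hψ : IsMF d g ψ)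
    (hψI : ∀ k p q, ψ k p q ∈ I) (a : Fin d → Q) (ha : ∀ j, a j ∈ I) :
    ∃ φ : ZMod d → Matrix (Fin (d ^ (n + 1))) (Fin (d ^ (n + 1))) Q,
      IsMF d (∏ j, a j + g) φ ∧ (∀ k p q, φ k p q ∈ I) ∧
        ∀ k, (φ k).det = ((-1) ^ (d - 1) * (∏ j, a j + g)) ^ d ^ n := by
  have : NeZero d := ⟨by omega⟩
  have hζd := pow_eq_one_of_prod_X_sub_C hζ hd
  set χ := AddChar.zmodChar d hζd
  have hχ1 : χ 1 = ζ := by simpa using AddChar.zmodChar_apply' hζd 1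
  have hχ : ∏ i ∈ range d, (X - C (χ 1 ^ i)) = X ^ d - 1 := by rwa [hχ1]
  have hprod : ∏ z, a (valEquiv d z) = ∏ j, a j := (valEquiv d).prod_comp a
  refine ⟨fun k => Matrix.reindex (finPowSuccEquiv d n) (finPowSuccEquiv d n)
    (tensorScalar χ ψ (fun z => a (valEquiv d z)) k), ?_, fun k p q => ?_, fun k => ?_⟩
  · rw [← hprod]
    exact (hψ.tensorScalar (fun z => a (valEquiv d z)) hχ).reindex (finPowSuccEquiv d n)
  · exact tensorScalar_apply_mem χ ψ _ hψI (fun z => ha _) k _ _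
  · rw [Matrix.det_reindex_self, det_tensorScalar _ hχ hψ, hprod, Fintype.card_fin]

theorem exists_isMF_sum_prod (I : Ideal Q) : ∀ (n : ℕ) (G : Fin (n + 1) → Fin d → Q),
    (∀ i j, G i j ∈ I) → ∃ ψ : ZMod d → Matrix (Fin (d ^ n)) (Fin (d ^ n)) Q,
      IsMF d (∑ i, ∏ j, G i j) ψ ∧ ∀ k p q, ψ k p q ∈ I
  | 0, G, hG => by
      have : NeZero d := ⟨by omega⟩
      refine ⟨fun k => G 0 (valEquiv d k) • 1, ?_, fun k p q => ?_⟩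
      · rw [Fin.sum_univ_one, ← (valEquiv d).prod_comp (G 0)]
        exact isMF_smul_one fun k => G 0 (valEquiv d k)
      · change (G 0 (valEquiv d k) • (1 : Matrix (Fin (d ^ 0)) (Fin (d ^ 0)) Q)) p q ∈ I
        rw [Matrix.smul_apply, smul_eq_mul]
        exact I.mul_mem_right _ (hG 0 _)
  | n + 1, G, hG => by
      obtain ⟨ψ, hψ, hψI⟩ := exists_isMF_sum_prod I n (fun i => G i.succ) fun i j => hG i.succ j
      obtain ⟨φ, hφ, hφI, -⟩ := exists_isMF_pow_succ hd hζ hψ hψI (G 0) (hG 0)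
      exact ⟨φ, by rwa [Fin.sum_univ_succ], hφI⟩

end Construction

end MF

theorem exists_reduced_MF_with_det_general {Q : Type*} [CommRing Q] [IsLocalRing Q]
    (d N : ℕ) (hd : 2 ≤ d) (hN : 2 ≤ N) (ζ : Q)
    (hζ : ∏ i ∈ Finset.range d, (Polynomial.X - Polynomial.C (ζ ^ i)) =
      Polynomial.X ^ d - 1)
    (f : Q)
    (F : Fin N → Fin d → Q) (hF : ∀ i j, F i j ∈ IsLocalRing.maximalIdeal Q)
    (hsum : f = ∑ i : Fin N, ∏ j : Fin d, F i j) :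
    ∃ φ : ZMod d → Matrix (Fin (d ^ (N - 1))) (Fin (d ^ (N - 1))) Q,
      MF.IsMF d f φ ∧ MF.Reduced φ ∧
      ∃ ε : Q, (ε = 1 ∨ ε = -1) ∧ ∀ k : ZMod d, (φ k).det = ε * f ^ d ^ (N - 2) := by
  obtain ⟨n, rfl⟩ : ∃ n, N = n + 2 := ⟨N - 2, by omega⟩
  obtain ⟨ψ, hψ, hψm⟩ :=
    MF.exists_isMF_sum_prod hd hζ _ n (fun i => F i.succ) fun i j => hF i.succ j
  obtain ⟨φ, hφ, hφm, hdet⟩ := MF.exists_isMF_pow_succ hd hζ hψ hψm (F 0) (hF 0)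
  rw [← Fin.sum_univ_succ (fun i => ∏ j, F i j), ← hsum] at hφ hdet
  refine ⟨φ, hφ, hφm, ((-1) ^ (d - 1)) ^ d ^ n, ?_, fun k => by rw [hdet, mul_pow]; rfl⟩
  rw [← pow_mul]
  exact neg_one_pow_eq_or Q _

/-- if `f = ∑_{i=1}^N f_{i1}⋯f_{id}` with all `f_{ij}` in the maximal ideal,
then `f` admits a reduced `d`-fold matrix factorization of rank `d^{N-1}` whose matrices all
have determinant `± f^{d^{N-2}}` (Proposition 6.1). -/
theorem exists_reduced_MF_with_det {Q : Type*} [CommRing Q] [IsLocalRing Q]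
    [IsNoetherianRing Q] (d N : ℕ) (hd : 2 ≤ d) (hN : 2 ≤ N) (ζ : Q)
    (hζ : ∏ i ∈ Finset.range d, (Polynomial.X - Polynomial.C (ζ ^ i)) =
      Polynomial.X ^ d - 1)
    (f : Q) (hfm : f ∈ IsLocalRing.maximalIdeal Q) (hfnzd : f ∈ nonZeroDivisors Q)
    (F : Fin N → Fin d → Q) (hF : ∀ i j, F i j ∈ IsLocalRing.maximalIdeal Q)
    (hsum : f = ∑ i : Fin N, ∏ j : Fin d, F i j) :
    ∃ φ : ZMod d → Matrix (Fin (d ^ (N - 1))) (Fin (d ^ (N - 1))) Q,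
      MF.IsMF d f φ ∧ MF.Reduced φ ∧
      ∃ ε : Q, (ε = 1 ∨ ε = -1) ∧ ∀ k : ZMod d, (φ k).det = ε * f ^ d ^ (N - 2) :=
  exists_reduced_MF_with_det_general d N hd hN ζ hζ f F hF hsum
end
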